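/- Let (Z, dist) be a metric space with its Borel σ-algebra, μ a Borel probability measure on Z, γ ∈ [0,1), and K₁, K₂ : Z → ProbabilityMeasure Z measurable Markov kernels. Define the discounted visitation measures dᵢ = (1−γ) Σ_{t≥0} γ^t (μ bound t times through Kᵢ), i = 1, 2. Assume: (i) there is β ≥ 0 with γβ < 1 such that for every bounded 1-Lipschitz f : Z → ℝ, the map z ↦ ∫ f dK₁(z) is β-Lipschitz; and (ii) there is ε ≥ 0 such that for every z ∈ Z and every bounded 1-Lipschitz f : Z → ℝ, |∫ f dK₁(z) − ∫ f dK₂(z)| ≤ ε. Then for every bounded 1-Lipschitz f : Z → ℝ, |∫ f dd₁ − ∫ f dd₂| ≤ γε / (1 − γβ). -/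

import Mathlib

open MeasureTheory

/-- The `t`-step law `μ K^t` of a Markov kernel `K` started from `μ`. -/
noncomputable def iterLaw {Z : Type*} [MeasurableSpace Z]
    (K : Z → Measure Z) (μ : Measure Z) : ℕ → Measure Z
  | 0 => μ
  | t + 1 => (iterLaw K μ t).bind K

/-- The discounted visitation measure `(1 − γ) Σ_t γ^t μ K^t`. -/
noncomputable def discountedVisitation {Z : Type*} [MeasurableSpace Z]
    (K : Z → Measure Z) (μ : Measure Z) (γ : ℝ) : Measure Z :=
  ENNReal.ofReal (1 - γ) •
    Measure.sum fun t : ℕ => ENNReal.ofReal (γ ^ t) • iterLaw K μ t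

/-!
Both visitation measures solve `d = (1 - γ) μ + γ d.bind K`. For `f` that is `L`-Lipschitz and
bounded by `M`, put `g = ∫ f dK₁(·)`; adding and subtracting `∫ g dd₂` cancels the `μ`-terms
and gives `|∫ f dd₁ - ∫ f dd₂| ≤ γ (|∫ g dd₁ - ∫ g dd₂| + L ε)`, where `g` is `Lβ`-Lipschitz
and again bounded by `M`. Starting from the trivial bound `2M` and iterating `n` times yields
`L γε / (1 - γβ) + 2M γⁿ`, and the last term vanishes as `n → ∞`. Iterating, rather than solving
`W ≤ γβ W + γε` for the dual Wasserstein distance `W`, avoids having to know that `W` is finite.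
-/

open ProbabilityTheory Filter Topology
open scoped NNReal

namespace MeasureTheory.Measure

variable {α β E : Type*} [MeasurableSpace α] [MeasurableSpace β]
  [NormedAddCommGroup E] [NormedSpace ℝ E] {m : Measure α} {K : α → Measure β}

theorem integral_bind (hK : Measurable K) {f : β → E} (hf : Integrable f (m.bind K)) :
    ∫ x, f x ∂m.bind K = ∫ a, ∫ x, f x ∂K a ∂m := by
  let κ : Kernel α β := ⟨K, hK⟩
  change Integrable f (κ ∘ₘ m) at hf
  change ∫ x, f x ∂(κ ∘ₘ m) = ∫ a, ∫ x, f x ∂κ a ∂m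
  rw [comp_eq_comp_const_apply] at hf ⊢
  rw [Kernel.integral_comp hf]
  simp

theorem isProbabilityMeasure_bind [IsProbabilityMeasure m] [∀ a, IsProbabilityMeasure (K a)]
    (hK : Measurable K) : IsProbabilityMeasure (m.bind K) :=
  ⟨by simp [bind_apply .univ hK.aemeasurable]⟩

end MeasureTheory.Measure

section
variable {Z : Type*} [MeasurableSpace Z] {K : Z → Measure Z}

theorem isProbabilityMeasure_iterLaw [∀ z, IsProbabilityMeasure (K z)] (hK : Measurable K)
    (μ : Measure Z) [IsProbabilityMeasure μ] : ∀ t, IsProbabilityMeasure (iterLaw K μ t)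
  | 0 => ‹_›
  | t + 1 =>
    have := isProbabilityMeasure_iterLaw hK μ t
    Measure.isProbabilityMeasure_bind hK

theorem isProbabilityMeasure_discountedVisitation [∀ z, IsProbabilityMeasure (K z)]
    (hK : Measurable K) (μ : Measure Z) [IsProbabilityMeasure μ] {γ : ℝ} (hγ0 : 0 ≤ γ)
    (hγ1 : γ < 1) : IsProbabilityMeasure (discountedVisitation K μ γ) := by
  have := isProbabilityMeasure_iterLaw hK μ
  constructor
  simp only [discountedVisitation, Measure.smul_apply, Measure.sum_apply _ .univ, measure_univ,
    smul_eq_mul, mul_one, ENNReal.ofReal_pow hγ0, ENNReal.tsum_geometric]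
  rw [ENNReal.ofReal_sub _ hγ0, ENNReal.ofReal_one, ENNReal.mul_inv_cancel]
  · simpa [tsub_eq_zero_iff_le] using hγ1
  · simp

theorem discountedVisitation_eq (hK : Measurable K) (μ : Measure Z) {γ : ℝ} (hγ0 : 0 ≤ γ) :
    discountedVisitation K μ γ = ENNReal.ofReal (1 - γ) • μ +
      ENNReal.ofReal γ • (discountedVisitation K μ γ).bind K := by
  rw [discountedVisitation, Measure.bind_smul, Measure.bind_sum _ _ hK.aemeasurable]
  ext s hs
  simp only [Measure.add_apply, Measure.smul_apply, Measure.sum_apply _ hs, Measure.bind_smul,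
    smul_eq_mul]
  rw [tsum_eq_zero_add' ENNReal.summable]
  simp only [pow_succ', ENNReal.ofReal_mul hγ0, mul_assoc, ENNReal.tsum_mul_left]
  simp only [pow_zero, ENNReal.ofReal_one, iterLaw, one_mul]
  ring

theorem abs_integral_le_of_abs_le {ν : Measure Z} [IsProbabilityMeasure ν] {f : Z → ℝ} {M : ℝ}
    (hM : ∀ z, |f z| ≤ M) : |∫ z, f z ∂ν| ≤ M := by
  simpa using norm_integral_le_of_norm_le_const (μ := ν) (f := f) (ae_of_all _ hM)

theorem integral_eq_of_eq_add_bind {μ d : Measure Z} [IsFiniteMeasure μ] [IsProbabilityMeasure d]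
    [∀ z, IsProbabilityMeasure (K z)] (hK : Measurable K) {γ : ℝ} (hγ0 : 0 ≤ γ) (hγ1 : γ ≤ 1)
    (hd : d = ENNReal.ofReal (1 - γ) • μ + ENNReal.ofReal γ • d.bind K)
    {f : Z → ℝ} (hf : Measurable f) {M : ℝ} (hM : ∀ z, |f z| ≤ M) :
    ∫ z, f z ∂d = (1 - γ) * ∫ z, f z ∂μ + γ * ∫ z, ∫ w, f w ∂K z ∂d := by
  have := Measure.isProbabilityMeasure_bind (m := d) hK
  have hfi (ν : Measure Z) [IsFiniteMeasure ν] : Integrable f ν :=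
    .of_bound hf.aestronglyMeasurable M (ae_of_all _ hM)
  conv_lhs => rw [hd]
  rw [integral_add_measure ((hfi μ).smul_measure ENNReal.ofReal_ne_top)
      ((hfi _).smul_measure ENNReal.ofReal_ne_top), integral_smul_measure, integral_smul_measure,
    Measure.integral_bind hK (hfi _), ENNReal.toReal_ofReal (by linarith),
    ENNReal.toReal_ofReal hγ0, smul_eq_mul, smul_eq_mul]

end

section
variable {Z : Type*} [MetricSpace Z] [MeasurableSpace Z]

theorem abs_integral_sub_le_mul_of_lipschitzWith {ν₁ ν₂ : Measure Z} [IsProbabilityMeasure ν₁]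
    [IsProbabilityMeasure ν₂] {c : ℝ}
    (h : ∀ f : Z → ℝ, LipschitzWith 1 f → (∃ M, ∀ z, |f z| ≤ M) →
      |∫ z, f z ∂ν₁ - ∫ z, f z ∂ν₂| ≤ c)
    {L : ℝ≥0} {f : Z → ℝ} {M : ℝ} (hf : LipschitzWith L f) (hM : ∀ z, |f z| ≤ M) :
    |∫ z, f z ∂ν₁ - ∫ z, f z ∂ν₂| ≤ L * c := by
  rcases eq_or_ne L 0 with rfl | hL
  · obtain ⟨z₀⟩ := nonempty_of_isProbabilityMeasure ν₁
    have hconst : f = fun _ => f z₀ := funext fun z => by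
      simpa [dist_le_zero] using hf.dist_le_mul z z₀
    rw [hconst]
    simp
  · have hL' : (0 : ℝ) < L := by positivity
    have hLf : LipschitzWith 1 fun z => (L : ℝ)⁻¹ * f z := by
      simpa [hL, Function.comp_def] using (lipschitzWith_smul (L : ℝ)⁻¹).comp hf
    have hLM : ∀ z, |(L : ℝ)⁻¹ * f z| ≤ (L : ℝ)⁻¹ * M := fun z => by
      rw [abs_mul, abs_of_pos (inv_pos.2 hL')]
      exact mul_le_mul_of_nonneg_left (hM z) (inv_nonneg.2 hL'.le)
    have := h _ hLf ⟨_, hLM⟩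
    rwa [integral_const_mul, integral_const_mul, ← mul_sub, abs_mul, abs_of_pos (inv_pos.2 hL'),
      inv_mul_le_iff₀ hL'] at this

theorem lipschitzWith_integral_of_lipschitzWith {K : Z → Measure Z}
    [∀ z, IsProbabilityMeasure (K z)] {β : ℝ} (hβ : 0 ≤ β)
    (hK : ∀ f : Z → ℝ, LipschitzWith 1 f → (∃ M, ∀ z, |f z| ≤ M) →
      ∀ z z' : Z, |∫ w, f w ∂K z - ∫ w, f w ∂K z'| ≤ β * dist z z')
    {L : ℝ≥0} {f : Z → ℝ} {M : ℝ} (hf : LipschitzWith L f) (hM : ∀ z, |f z| ≤ M) :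
    LipschitzWith (L * β.toNNReal) fun z => ∫ w, f w ∂K z :=
  LipschitzWith.of_dist_le_mul fun z z' => by
    rw [Real.dist_eq, NNReal.coe_mul, Real.coe_toNNReal _ hβ, mul_assoc]
    exact abs_integral_sub_le_mul_of_lipschitzWith (fun g hg hgb => hK g hg hgb z z') hf hM

end

section
variable {Z : Type*} [MeasurableSpace Z] {μ d₁ d₂ : Measure Z} [IsProbabilityMeasure μ]
  [IsProbabilityMeasure d₁] [IsProbabilityMeasure d₂] {K₁ K₂ : Z → Measure Z}
  [∀ z, IsProbabilityMeasure (K₁ z)] [∀ z, IsProbabilityMeasure (K₂ z)] {γ : ℝ}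

theorem abs_integral_sub_le_mul_add_of_eq_add_bind (hγ0 : 0 ≤ γ) (hγ1 : γ ≤ 1)
    (hK₁ : Measurable K₁) (hK₂ : Measurable K₂)
    (hd₁ : d₁ = ENNReal.ofReal (1 - γ) • μ + ENNReal.ofReal γ • d₁.bind K₁)
    (hd₂ : d₂ = ENNReal.ofReal (1 - γ) • μ + ENNReal.ofReal γ • d₂.bind K₂)
    {f : Z → ℝ} (hf : Measurable f) {M : ℝ} (hM : ∀ z, |f z| ≤ M) {δ : ℝ}
    (hδ : ∀ z, |∫ w, f w ∂K₁ z - ∫ w, f w ∂K₂ z| ≤ δ) :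
    |∫ z, f z ∂d₁ - ∫ z, f z ∂d₂| ≤
      γ * (|∫ z, ∫ w, f w ∂K₁ z ∂d₁ - ∫ z, ∫ w, f w ∂K₁ z ∂d₂| + δ) := by
  set g₁ := fun z => ∫ w, f w ∂K₁ z
  set g₂ := fun z => ∫ w, f w ∂K₂ z
  have hg (K : Z → Measure Z) [∀ z, IsProbabilityMeasure (K z)] (hK : Measurable K) :
      Integrable (fun z => ∫ w, f w ∂K z) d₂ :=
    .of_bound (hf.stronglyMeasurable.integral_kernel (κ := ⟨K, hK⟩)).aestronglyMeasurable M
      (ae_of_all _ fun z => abs_integral_le_of_abs_le hM)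
  have hcross : |∫ z, g₁ z ∂d₂ - ∫ z, g₂ z ∂d₂| ≤ δ := by
    rw [← integral_sub (hg K₁ hK₁) (hg K₂ hK₂)]
    exact abs_integral_le_of_abs_le hδ
  rw [integral_eq_of_eq_add_bind hK₁ hγ0 hγ1 hd₁ hf hM,
    integral_eq_of_eq_add_bind hK₂ hγ0 hγ1 hd₂ hf hM]
  calc |(1 - γ) * ∫ z, f z ∂μ + γ * ∫ z, g₁ z ∂d₁ - ((1 - γ) * ∫ z, f z ∂μ + γ * ∫ z, g₂ z ∂d₂)|
      = |γ * ((∫ z, g₁ z ∂d₁ - ∫ z, g₁ z ∂d₂) + (∫ z, g₁ z ∂d₂ - ∫ z, g₂ z ∂d₂))| := by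
        congr 1
        ring
    _ = γ * |(∫ z, g₁ z ∂d₁ - ∫ z, g₁ z ∂d₂) + (∫ z, g₁ z ∂d₂ - ∫ z, g₂ z ∂d₂)| := by
        rw [abs_mul, abs_of_nonneg hγ0]
    _ ≤ γ * (|∫ z, g₁ z ∂d₁ - ∫ z, g₁ z ∂d₂| + δ) := by
        gcongr
        exact (abs_add_le _ _).trans (add_le_add_right hcross _)

theorem abs_integral_sub_le_add_pow_of_eq_add_bind [MetricSpace Z] [BorelSpace Z]
    (hγ0 : 0 ≤ γ) (hγ1 : γ ≤ 1) (hK₁ : Measurable K₁) (hK₂ : Measurable K₂)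
    (hd₁ : d₁ = ENNReal.ofReal (1 - γ) • μ + ENNReal.ofReal γ • d₁.bind K₁)
    (hd₂ : d₂ = ENNReal.ofReal (1 - γ) • μ + ENNReal.ofReal γ • d₂.bind K₂)
    {β : ℝ} (hβ : 0 ≤ β) (hγβ : γ * β < 1)
    (hK₁_lip : ∀ f : Z → ℝ, LipschitzWith 1 f → (∃ M, ∀ z, |f z| ≤ M) →
      ∀ z z' : Z, |(∫ w, f w ∂(K₁ z)) - ∫ w, f w ∂(K₁ z')| ≤ β * dist z z')
    {ε : ℝ} (hε : 0 ≤ ε)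
    (h_close : ∀ z : Z, ∀ f : Z → ℝ, LipschitzWith 1 f → (∃ M, ∀ w, |f w| ≤ M) →
      |(∫ w, f w ∂(K₁ z)) - ∫ w, f w ∂(K₂ z)| ≤ ε) (n : ℕ) {L : ℝ≥0} {f : Z → ℝ}
    (hf : LipschitzWith L f) {M : ℝ} (hM : ∀ z, |f z| ≤ M) :
    |∫ z, f z ∂d₁ - ∫ z, f z ∂d₂| ≤ L * (γ * ε / (1 - γ * β)) + 2 * M * γ ^ n := by
  set C := γ * ε / (1 - γ * β)
  have hC : γ * β * C + γ * ε = C := by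
    have := (sub_pos.2 hγβ).ne'
    simp only [C]
    field_simp
    ring
  induction n generalizing L f M with
  | zero =>
    have hC0 : 0 ≤ C := div_nonneg (mul_nonneg hγ0 hε) (sub_pos.2 hγβ).le
    calc |∫ z, f z ∂d₁ - ∫ z, f z ∂d₂| ≤ |∫ z, f z ∂d₁| + |∫ z, f z ∂d₂| := abs_sub _ _
      _ ≤ M + M := add_le_add (abs_integral_le_of_abs_le hM) (abs_integral_le_of_abs_le hM)
      _ ≤ L * C + 2 * M * γ ^ 0 := by
        rw [pow_zero]
        linarith [mul_nonneg L.coe_nonneg hC0]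
  | succ n ih =>
    have hg₁ := lipschitzWith_integral_of_lipschitzWith hβ hK₁_lip hf hM
    have hg₁M : ∀ z, |∫ w, f w ∂K₁ z| ≤ M := fun z => abs_integral_le_of_abs_le hM
    calc |∫ z, f z ∂d₁ - ∫ z, f z ∂d₂|
        ≤ γ * (|∫ z, ∫ w, f w ∂K₁ z ∂d₁ - ∫ z, ∫ w, f w ∂K₁ z ∂d₂| + L * ε) :=
          abs_integral_sub_le_mul_add_of_eq_add_bind hγ0 hγ1 hK₁ hK₂ hd₁ hd₂
            hf.continuous.measurable hM fun z =>
              abs_integral_sub_le_mul_of_lipschitzWith (h_close z) hf hM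
      _ ≤ γ * ((L * β.toNNReal : ℝ≥0) * C + 2 * M * γ ^ n + L * ε) := by
          gcongr
          exact ih hg₁ hg₁M
      _ = L * C + 2 * M * γ ^ (n + 1) := by
          rw [NNReal.coe_mul, Real.coe_toNNReal _ hβ, pow_succ]
          linear_combination L * hC

theorem abs_integral_sub_le_of_eq_add_bind [MetricSpace Z] [BorelSpace Z]
    (hγ0 : 0 ≤ γ) (hγ1 : γ < 1) (hK₁ : Measurable K₁) (hK₂ : Measurable K₂)
    (hd₁ : d₁ = ENNReal.ofReal (1 - γ) • μ + ENNReal.ofReal γ • d₁.bind K₁)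
    (hd₂ : d₂ = ENNReal.ofReal (1 - γ) • μ + ENNReal.ofReal γ • d₂.bind K₂)
    {β : ℝ} (hβ : 0 ≤ β) (hγβ : γ * β < 1)
    (hK₁_lip : ∀ f : Z → ℝ, LipschitzWith 1 f → (∃ M, ∀ z, |f z| ≤ M) →
      ∀ z z' : Z, |(∫ w, f w ∂(K₁ z)) - ∫ w, f w ∂(K₁ z')| ≤ β * dist z z')
    {ε : ℝ} (hε : 0 ≤ ε)
    (h_close : ∀ z : Z, ∀ f : Z → ℝ, LipschitzWith 1 f → (∃ M, ∀ w, |f w| ≤ M) →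
      |(∫ w, f w ∂(K₁ z)) - ∫ w, f w ∂(K₂ z)| ≤ ε) {f : Z → ℝ}
    (hf : LipschitzWith 1 f) {M : ℝ} (hM : ∀ z, |f z| ≤ M) :
    |∫ z, f z ∂d₁ - ∫ z, f z ∂d₂| ≤ γ * ε / (1 - γ * β) := by
  have hbound (n : ℕ) := abs_integral_sub_le_add_pow_of_eq_add_bind hγ0 hγ1.le hK₁ hK₂ hd₁ hd₂
    hβ hγβ hK₁_lip hε h_close n hf hM
  simp only [NNReal.coe_one, one_mul] at hbound
  refine ge_of_tendsto' (x := atTop) ?_ hbound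
  simpa using tendsto_const_nhds.add
    ((tendsto_pow_atTop_nhds_zero_of_lt_one hγ0 hγ1).const_mul (2 * M))

end

/-- **Abstract core of Theorem `state_distrib_bound`.** If the expectation operator of the
kernel `K₁` maps bounded 1-Lipschitz functions to `β`-Lipschitz functions (`γβ < 1`) and `K₁`
and `K₂` are pointwise `ε`-close in dual Wasserstein form, then the discounted visitation
measures of `K₁` and `K₂` are `γε/(1 − γβ)`-close in dual Wasserstein form. -/
theorem state_distrib_bound {Z : Type*} [MetricSpace Z] [MeasurableSpace Z] [BorelSpace Z]
    (μ : Measure Z) [IsProbabilityMeasure μ]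
    (γ : ℝ) (hγ0 : 0 ≤ γ) (hγ1 : γ < 1)
    (K₁ K₂ : Z → Measure Z)
    (hK₁_prob : ∀ z, IsProbabilityMeasure (K₁ z))
    (hK₂_prob : ∀ z, IsProbabilityMeasure (K₂ z))
    (hK₁_meas : Measurable K₁) (hK₂_meas : Measurable K₂)
    (β : ℝ) (hβ : 0 ≤ β) (hγβ : γ * β < 1)
    (hK₁_lip : ∀ f : Z → ℝ, LipschitzWith 1 f → (∃ M, ∀ z, |f z| ≤ M) →
      ∀ z z' : Z, |(∫ w, f w ∂(K₁ z)) - ∫ w, f w ∂(K₁ z')| ≤ β * dist z z')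
    (ε : ℝ) (hε : 0 ≤ ε)
    (h_close : ∀ z : Z, ∀ f : Z → ℝ, LipschitzWith 1 f → (∃ M, ∀ w, |f w| ≤ M) →
      |(∫ w, f w ∂(K₁ z)) - ∫ w, f w ∂(K₂ z)| ≤ ε) :
    ∀ f : Z → ℝ, LipschitzWith 1 f → (∃ M, ∀ z, |f z| ≤ M) →
      |(∫ z, f z ∂(discountedVisitation K₁ μ γ)) -
          ∫ z, f z ∂(discountedVisitation K₂ μ γ)| ≤
        γ * ε / (1 - γ * β) := by
  rintro f hf ⟨M, hM⟩
  have := isProbabilityMeasure_discountedVisitation hK₁_meas μ hγ0 hγ1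
  have := isProbabilityMeasure_discountedVisitation hK₂_meas μ hγ0 hγ1
  exact abs_integral_sub_le_of_eq_add_bind hγ0 hγ1 hK₁_meas hK₂_meas
    (discountedVisitation_eq hK₁_meas μ hγ0) (discountedVisitation_eq hK₂_meas μ hγ0)
    hβ hγβ hK₁_lip hε h_close hf hM
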